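/- For the (q,1,v,1)-deformed operators on the quadrabasic Fock space, the commutation relation A_{ξ₁⊗η₁} A*_{ξ₂⊗η₂} − qv·A*_{ξ₂⊗η₂} A_{ξ₁⊗η₁} = q⟨η₁,η₂⟩·(a*_{q,1}(ξ₂)a_{q,1}(ξ₁) ⊗ I) + v⟨ξ₁,ξ₂⟩·(I ⊗ a*_{v,1}(η₂)a_{v,1}(η₁)) + ⟨ξ₁,ξ₂⟩⟨η₁,η₂⟩·(I ⊗ I) holds. -/

import Mathlib

/-
Under the identification `(List H →₀ ℝ) ⊗ (List K →₀ ℝ) ≃ (List H × List K →₀ ℝ)`, `tensOp S T`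
is `S ⊗ T`, so it is multiplicative and bilinear in `(S, T)`. In one mode, annihilating the
letters of `ζ :: l` gives `⟪ξ, ζ⟫ t^|l|` from the first letter and `q` times the annihilation of
`l` from the others: `a_{q,t}(ξ) a*(ζ) = q a*(ζ) a_{q,t}(ξ) + ⟪ξ, ζ⟫ t^N`. Tensoring two such
relations, the product of the two `q`- and `v`-terms is `qv A* A`, and the rest is the right-hand
side; at `t = w = 1` the operators `t^N` are the identity.
-/

open scoped RealInnerProductSpace

noncomputable section

variable {H K : Type*} [NormedAddCommGroup H] [InnerProductSpace ℝ H]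
  [NormedAddCommGroup K] [InnerProductSpace ℝ K]

/-- The algebraic full Fock space, modelled as the free module on finite sequences of
vectors. -/
abbrev FockModel (H : Type*) := List H →₀ ℝ

/-- The diagonal Fock space over a pair of Hilbert spaces. -/
abbrev DiagFock (H K : Type*) := (List H × List K) →₀ ℝ

/-- The creation operator `a*(ξ)`. -/
def creOp (ξ : H) : FockModel H →ₗ[ℝ] FockModel H :=
  Finsupp.lmapDomain ℝ ℝ (fun l => ξ :: l)

/-- The `(q,t)`-annihilation operator. -/
def annOp (q t : ℝ) (ξ : H) : FockModel H →ₗ[ℝ] FockModel H :=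
  Finsupp.linearCombination ℝ (fun l : List H =>
    ∑ i ∈ Finset.range l.length,
      (q ^ i * t ^ (l.length - 1 - i) * ⟪ξ, l.getD i 0⟫) • Finsupp.single (l.eraseIdx i) (1 : ℝ))

/-- The tensor product `S ⊗_S T` of operators, acting on the diagonal Fock space. -/
def tensOp (S : FockModel H →ₗ[ℝ] FockModel H) (T : FockModel K →ₗ[ℝ] FockModel K) :
    DiagFock H K →ₗ[ℝ] DiagFock H K :=
  Finsupp.linearCombination ℝ (fun p : List H × List K =>
    (S (Finsupp.single p.1 1)).sum fun l a =>
      (T (Finsupp.single p.2 1)).sum fun m b => (a * b) • Finsupp.single (l, m) (1 : ℝ))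

section

variable {X Y : Type*}

/-- `t^N`, where `N` is the number operator. -/
def powNumberOp (t : ℝ) : FockModel X →ₗ[ℝ] FockModel X :=
  Finsupp.linearCombination ℝ fun l : List X => t ^ l.length • Finsupp.single l (1 : ℝ)

theorem powNumberOp_one : powNumberOp 1 = (LinearMap.id : FockModel X →ₗ[ℝ] FockModel X) := by
  refine Finsupp.lhom_ext' fun l => LinearMap.ext_ring ?_
  simp [powNumberOp]

theorem creOp_single (ζ : X) (l : List X) (a : ℝ) :
    creOp ζ (Finsupp.single l a) = Finsupp.single (ζ :: l) a :=
  Finsupp.mapDomain_single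

theorem tensOp_eq_conj_map (S : FockModel X →ₗ[ℝ] FockModel X)
    (T : FockModel Y →ₗ[ℝ] FockModel Y) :
    tensOp S T = (finsuppTensorFinsupp' ℝ (List X) (List Y)).conj (TensorProduct.map S T) := by
  refine Finsupp.lhom_ext' fun p => LinearMap.ext_ring ?_
  dsimp only [LinearMap.comp_apply, Finsupp.lsingle_apply]
  rw [LinearEquiv.conj_apply_apply, finsuppTensorFinsupp'_symm_single_eq_single_one_tmul,
    TensorProduct.map_tmul, tensOp, Finsupp.linearCombination_single, one_smul]
  conv_rhs => rw [← Finsupp.sum_single (S _), ← Finsupp.sum_single (T _)]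
  simp only [Finsupp.sum, TensorProduct.sum_tmul, TensorProduct.tmul_sum, map_sum,
    finsuppTensorFinsupp'_single_tmul_single, Finsupp.smul_single_one]
  exact Finset.sum_comm

end

theorem annOp_single_one (q t : ℝ) (ξ : H) (l : List H) :
    annOp q t ξ (Finsupp.single l 1) = ∑ i ∈ Finset.range l.length,
      (q ^ i * t ^ (l.length - 1 - i) * ⟪ξ, l.getD i 0⟫) • Finsupp.single (l.eraseIdx i) (1 : ℝ) := by
  rw [annOp, Finsupp.linearCombination_single, one_smul]

theorem annOp_comp_creOp (q t : ℝ) (ξ ζ : H) :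
    annOp q t ξ ∘ₗ creOp ζ = q • (creOp ζ ∘ₗ annOp q t ξ) + ⟪ξ, ζ⟫ • powNumberOp t := by
  refine Finsupp.lhom_ext' fun l => LinearMap.ext_ring ?_
  simp only [LinearMap.comp_apply, LinearMap.add_apply, LinearMap.smul_apply,
    Finsupp.lsingle_apply, creOp_single, annOp_single_one, map_sum, map_smul, powNumberOp,
    Finsupp.linearCombination_single, List.length_cons, Finset.sum_range_succ',
    List.getD_cons_succ, List.getD_cons_zero, List.eraseIdx_cons_succ, List.eraseIdx_cons_zero,
    Finset.smul_sum]
  congr 1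
  · refine Finset.sum_congr rfl fun k _ => ?_
    rw [smul_smul, Nat.add_sub_cancel, Nat.sub_sub, Nat.add_comm 1 k, pow_succ']
    congr 1
    ring
  · rw [pow_zero, one_mul, Nat.add_sub_cancel, Nat.sub_zero, one_smul, smul_smul, mul_comm]

theorem tensOp_annOp_comp_creOp_sub (q t v w : ℝ) (ξ₁ ξ₂ : H) (η₁ η₂ : K) :
    tensOp (annOp q t ξ₁) (annOp v w η₁) ∘ₗ tensOp (creOp ξ₂) (creOp η₂) -
        (q * v) • (tensOp (creOp ξ₂) (creOp η₂) ∘ₗ tensOp (annOp q t ξ₁) (annOp v w η₁)) =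
      (q * ⟪η₁, η₂⟫) • tensOp (creOp ξ₂ ∘ₗ annOp q t ξ₁) (powNumberOp w) +
        (v * ⟪ξ₁, ξ₂⟫) • tensOp (powNumberOp t) (creOp η₂ ∘ₗ annOp v w η₁) +
        (⟪ξ₁, ξ₂⟫ * ⟪η₁, η₂⟫) • tensOp (powNumberOp t) (powNumberOp w) := by
  simp only [tensOp_eq_conj_map, ← LinearEquiv.conj_comp, ← TensorProduct.map_comp,
    annOp_comp_creOp, TensorProduct.map_add_left, TensorProduct.map_add_right,
    TensorProduct.map_smul_left, TensorProduct.map_smul_right, map_add, map_smul]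
  module

/-- The quadrabasic commutation relation for `t = w = 1`:
`A_{ξ₁⊗η₁} A*_{ξ₂⊗η₂} − qv · A*_{ξ₂⊗η₂} A_{ξ₁⊗η₁}
  = q⟨η₁,η₂⟩ (a*_{q,1}(ξ₂)a_{q,1}(ξ₁) ⊗ I) + v⟨ξ₁,ξ₂⟩ (I ⊗ a*_{v,1}(η₂)a_{v,1}(η₁))
    + ⟨ξ₁,ξ₂⟩⟨η₁,η₂⟩ (I ⊗ I)`. -/
theorem quadrabasic_commutation_relation (q v : ℝ) (ξ₁ ξ₂ : H) (η₁ η₂ : K) :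
    (tensOp (annOp q 1 ξ₁) (annOp v 1 η₁)) ∘ₗ (tensOp (creOp ξ₂) (creOp η₂)) -
        (q * v) • ((tensOp (creOp ξ₂) (creOp η₂)) ∘ₗ (tensOp (annOp q 1 ξ₁) (annOp v 1 η₁))) =
      (q * ⟪η₁, η₂⟫) • tensOp ((creOp ξ₂) ∘ₗ (annOp q 1 ξ₁)) LinearMap.id +
        (v * ⟪ξ₁, ξ₂⟫) • tensOp LinearMap.id ((creOp η₂) ∘ₗ (annOp v 1 η₁)) +
        (⟪ξ₁, ξ₂⟫ * ⟪η₁, η₂⟫) • tensOp (LinearMap.id : FockModel H →ₗ[ℝ] FockModel H)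
          (LinearMap.id : FockModel K →ₗ[ℝ] FockModel K) := by
  simpa only [powNumberOp_one] using tensOp_annOp_comp_creOp_sub q 1 v 1 ξ₁ ξ₂ η₁ η₂

end
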